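/- Let A be a real m × n matrix, b ∈ ℝ^m, α > 0, and μ > 0. Define G_μ(x) = (α/2)‖A x − b‖₂² + Φ_μ(x). If x̂ ∈ ℝⁿ is a local minimizer of G_μ, then |x̂_i| ≠ μ for all i = 1, …, n. -/
import Mathlib


/-- Scalar truncated Huber function: φ_μ(t) = min(1, t²/μ²). -/
noncomputable def phiTH (μ t : ℝ) : ℝ := min 1 (t ^ 2 / μ ^ 2)

/-- Truncated Huber penalty: Φ_μ(x) = Σ_i φ_μ(x_i). -/
noncomputable def PhiTH {n : ℕ} (μ : ℝ) (x : Fin n → ℝ) : ℝ := ∑ i, phiTH μ (x i)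

/-- Euclidean norm of a vector. -/
noncomputable def norm2 {m : ℕ} (u : Fin m → ℝ) : ℝ := Real.sqrt (∑ i, (u i) ^ 2)

/-- The objective G_μ(x) = (α/2)‖Ax − b‖₂² + Φ_μ(x). -/
noncomputable def Gobj {m n : ℕ} (A : Matrix (Fin m) (Fin n) ℝ) (b : Fin m → ℝ)
    (α μ : ℝ) (x : Fin n → ℝ) : ℝ :=
  α / 2 * (norm2 (A.mulVec x - b)) ^ 2 + PhiTH μ x

theorem stmt12 {m n : ℕ} (A : Matrix (Fin m) (Fin n) ℝ) (b : Fin m → ℝ)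
    (α μ : ℝ) (hα : 0 < α) (hμ : 0 < μ) (xh : Fin n → ℝ)
    (hloc : ∃ δ > 0, ∀ x : Fin n → ℝ, norm2 (x - xh) < δ →
      Gobj A b α μ xh ≤ Gobj A b α μ x) :
    ∀ i, |xh i| ≠ μ := by
  intro i hi
  obtain ⟨δ, hδ, hmin⟩ := hloc
  -- abbreviations for the quadratic part
  have hnorm : ∀ (v : Fin m → ℝ), norm2 v ^ 2 = ∑ j, v j ^ 2 := fun v =>
    Real.sq_sqrt (Finset.sum_nonneg fun j _ => sq_nonneg _)
  set u : Fin m → ℝ := fun j => A.mulVec xh j - b j with hu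
  set w : Fin m → ℝ := A.mulVec ((Pi.single i (1:ℝ) : Fin n → ℝ)) with hw
  set W : ℝ := ∑ j, (w j) ^ 2 with hWdef
  set P : ℝ := ∑ j, u j * w j with hPdef
  have hW0 : 0 ≤ W := Finset.sum_nonneg fun j _ => sq_nonneg _
  have hphi1 : phiTH μ (xh i) = 1 := by
    unfold phiTH
    have hsq : (xh i) ^ 2 = μ ^ 2 := by rw [← sq_abs, hi]
    rw [hsq, div_self (by positivity), min_self]
  -- the perturbed point as an additive perturbation
  have hxt : ∀ t : ℝ, Function.update xh i (xh i + t) = xh + t • (Pi.single i (1:ℝ) : Fin n → ℝ) := by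
    intro t; funext j
    by_cases hj : j = i
    · subst hj; simp
    · simp [Function.update_of_ne hj, Pi.single_eq_of_ne hj]
  -- distance formula
  have hdist : ∀ t : ℝ, norm2 (Function.update xh i (xh i + t) - xh) = |t| := by
    intro t
    unfold norm2
    have hs : ∑ j, ((Function.update xh i (xh i + t) - xh) j) ^ 2 = t ^ 2 := by
      rw [Finset.sum_eq_single i]
      · simp
      · intro j _ hj; simp [Function.update_of_ne hj]
      · simp
    rw [hs, Real.sqrt_sq_eq_abs]
  -- penalty decomposition
  have hPhi : ∀ v : ℝ, PhiTH μ (Function.update xh i v)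
      = PhiTH μ xh - phiTH μ (xh i) + phiTH μ v := by
    intro v
    unfold PhiTH
    have h1 : ∀ g : Fin n → ℝ, ∑ j, phiTH μ (g j)
        = phiTH μ (g i) + ∑ j ∈ Finset.univ.erase i, phiTH μ (g j) :=
      fun g => (Finset.add_sum_erase _ _ (Finset.mem_univ i)).symm
    rw [h1, h1 xh]
    have h2 : ∑ j ∈ Finset.univ.erase i, phiTH μ (Function.update xh i v j)
        = ∑ j ∈ Finset.univ.erase i, phiTH μ (xh j) := by
      refine Finset.sum_congr rfl fun j hj => ?_
      rw [Function.update_of_ne (Finset.ne_of_mem_erase hj)]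
    rw [h2, Function.update_self]
    ring
  -- value of the objective at the perturbed point
  have hG : ∀ t : ℝ, Gobj A b α μ (Function.update xh i (xh i + t))
      = α / 2 * (∑ j, u j ^ 2) + α * t * P + α / 2 * t ^ 2 * W
        + (PhiTH μ xh - 1) + phiTH μ (xh i + t) := by
    intro t
    unfold Gobj
    rw [hnorm, hPhi, hphi1, hxt t]
    have hmv : ∀ j, (A.mulVec (xh + t • (Pi.single i (1:ℝ) : Fin n → ℝ)) - b) j = u j + t * w j := by
      intro j
      simp only [Pi.sub_apply, Matrix.mulVec_add, Matrix.mulVec_smul, Pi.add_apply,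
        Pi.smul_apply, smul_eq_mul, hu, hw]
      ring
    have hsq : ∑ j, ((A.mulVec (xh + t • (Pi.single i (1:ℝ) : Fin n → ℝ)) - b) j) ^ 2
        = (∑ j, u j ^ 2) + 2 * t * P + t ^ 2 * W := by
      rw [hPdef, hWdef, Finset.mul_sum, Finset.mul_sum, ← Finset.sum_add_distrib,
        ← Finset.sum_add_distrib]
      refine Finset.sum_congr rfl fun j _ => ?_
      rw [hmv j]; ring
    rw [hsq]; ring
  -- value of the objective at xh
  have hGxh : Gobj A b α μ xh = α / 2 * (∑ j, u j ^ 2) + PhiTH μ xh := by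
    unfold Gobj
    rw [hnorm]
    rfl
  -- first-order inequality from local minimality
  have key : ∀ t : ℝ, |t| < δ →
      0 ≤ α * t * P + α / 2 * t ^ 2 * W + phiTH μ (xh i + t) - 1 := by
    intro t ht
    have hm := hmin (Function.update xh i (xh i + t)) (by rw [hdist t]; exact ht)
    rw [hG t, hGxh] at hm
    linarith
  -- choose ε
  set ε : ℝ := min (δ / 2) (μ / (α * W * μ ^ 2 + 1)) with hε
  have hden : 0 < α * W * μ ^ 2 + 1 := by positivity
  have hε0 : 0 < ε := lt_min (by linarith) (by positivity)
  have hεδ : |ε| < δ := by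
    rw [abs_of_pos hε0]
    calc ε ≤ δ / 2 := min_le_left _ _
    _ < δ := by linarith
  have h1 := key ε hεδ
  have h2 := key (-ε) (by rwa [abs_neg])
  rw [show xh i + -ε = xh i - ε by ring] at h2
  -- penalty bound
  have hA : phiTH μ (xh i + ε) + phiTH μ (xh i - ε) ≤ 1 + (μ - ε) ^ 2 / μ ^ 2 := by
    rcases (abs_eq hμ.le).mp hi with h | h
    · have hin : phiTH μ (xh i - ε) ≤ (μ - ε) ^ 2 / μ ^ 2 := by
        rw [h]; exact min_le_right _ _
      have hout : phiTH μ (xh i + ε) ≤ 1 := min_le_left _ _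
      linarith
    · have hin : phiTH μ (xh i + ε) ≤ (μ - ε) ^ 2 / μ ^ 2 := by
        rw [h]
        unfold phiTH
        rw [show (-μ + ε) ^ 2 = (μ - ε) ^ 2 by ring]
        exact min_le_right _ _
      have hout : phiTH μ (xh i - ε) ≤ 1 := min_le_left _ _
      linarith
  -- combine: 0 ≤ α ε² W + (μ-ε)²/μ² - 1
  have hcomb : 0 ≤ α * ε ^ 2 * W + (μ - ε) ^ 2 / μ ^ 2 - 1 := by linarith
  have hdiv : (μ - ε) ^ 2 / μ ^ 2 * μ ^ 2 = (μ - ε) ^ 2 :=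
    div_mul_cancel₀ _ (by positivity)
  -- clear denominator: 2με - ε² ≤ α ε² W μ²
  have hmain : 2 * μ * ε - ε ^ 2 ≤ α * ε ^ 2 * W * μ ^ 2 := by
    nlinarith [mul_le_mul_of_nonneg_right hcomb (sq_nonneg μ)]
  -- bound from choice of ε
  have hεle : ε * (α * W * μ ^ 2 + 1) ≤ μ := by
    have := min_le_right (δ / 2) (μ / (α * W * μ ^ 2 + 1))
    calc ε * (α * W * μ ^ 2 + 1) ≤ μ / (α * W * μ ^ 2 + 1) * (α * W * μ ^ 2 + 1) :=
          mul_le_mul_of_nonneg_right this hden.le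
      _ = μ := div_mul_cancel₀ _ hden.ne'
  have hcontra : μ * ε ≤ 0 := by
    nlinarith [mul_le_mul_of_nonneg_left hεle hε0.le]
  nlinarith [mul_pos hμ hε0]
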